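/- arXiv:1307.2381 — 2 statements merged into one kernel-verified Lean document; each statement's English description precedes it below -/
import Mathlib

section
/- Fix positive integers n, m, p, n_E, n_F, n_G, n_H, M, K. For each μ ∈ {1,…,M} let A(μ) ∈ ℝ^{n×n}, B(μ) ∈ ℝ^{n×m}, C(μ) ∈ ℝ^{p×n}, E(μ) ∈ ℝ^{n×n_E}, F(μ) ∈ ℝ^{n×n_F}, G(μ) ∈ ℝ^{n×n_G}, H(μ) ∈ ℝ^{n_H×n}, let R̃(μ) ∈ ℝ^{m×m} be symmetric positive definite, and let β̄(μ) > 0. Let q ∈ ℝ^{M×M} with q_{μν} ≥ 0 whenever ν ≠ μ, and let γ > 0, τ̄ > 0, θ̄ > 0 and s_1,…,s_K > 0; set σ = τ̄^{-1} + Σ_{k=1}^K s_k^{-1}. Suppose that for each μ there is a symmetric positive definite X(μ) ∈ ℝ^{n×n} such that the symmetric block matrix [[Υ11(μ), Υ12(μ), Υ13(μ)],[Υ12(μ)ᵀ, Υ22(μ), 0],[Υ13(μ)ᵀ, 0, Υ33(μ)]] is negative definite, where Υ11(μ) = X(μ)A(μ)ᵀ + A(μ)X(μ) + θ̄E(μ)E(μ)ᵀ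 + τ̄F(μ)F(μ)ᵀ + γ^{-2}G(μ)G(μ)ᵀ − B(μ)R̃(μ)^{-1}B(μ)ᵀ + q_{μμ}X(μ); Υ12(μ) = X(μ)·[C(μ)ᵀ, I_n, H(μ)ᵀ, …, H(μ)ᵀ] with K+1 copies of H(μ)ᵀ; Υ22(μ) = −diag[I_p, β̄(μ)·I_n, τ̄·I_{n_H}, s_1·I_{n_H}, …, s_K·I_{n_H}]; Υ13(μ) = X(μ)·[√q_{μ1}·I_n, …, √q_{μ,μ−1}·I_n, √q_{μ,μ+1}·I_n, …, √q_{μM}·I_n]; Υ33(μ) = −diag[X(1), …, X(μ−1), X(μ+1), …, X(M)]. Then, setting X̄(μ) = X(μ)^{-1} and K̃(μ) = −R̃(μ)^{-1}B(μ)ᵀX̄(μ), for every μ the symmetric matrix (A(μ)+B(μ)K̃(μ))ᵀX̄(μ) + X̄(μ)(A(μ)+B(μ)K̃(μ)) + C(μ)ᵀC(μ) + β̄(μ)^{-1}·I_n + Σ_{ν=1}^M q_{μν}X̄(ν) + σ·H(μ)ᵀH(μ) + X̄(μ)[θ̄E(μ)E(μ)ᵀ + τ̄F(μ)F(μ)ᵀ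 + γ^{-2}G(μ)G(μ)ᵀ]X̄(μ) + K̃(μ)ᵀR̃(μ)K̃(μ) is negative definite. -/
/-!
Congruence by `L = [X⁻¹; Z; W]`, with `Z = −Υ22⁻¹Υ12ᵀX⁻¹` and `W = −Υ33⁻¹Υ13ᵀX⁻¹` chosen so that
the last two block rows of `Φ L` vanish, turns the LMI matrix `Φ` into
`X⁻¹Υ11X⁻¹ + Υ12 Z + Υ13 W`; this stays negative definite because `L` is injective. Here
`Υ12 Z = CᵀC + β̄⁻¹I + σHᵀH` and `Υ13 W = ∑_{ν ≠ μ} q_{μν} X(ν)⁻¹`, and with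
`K̃ = −R̃⁻¹BᵀX⁻¹` the term `−X⁻¹BR̃⁻¹BᵀX⁻¹` of `X⁻¹Υ11X⁻¹` is the completed square
`(BK̃)ᵀX⁻¹ + X⁻¹BK̃ + K̃ᵀR̃K̃`, which yields the Riccati expression.
-/

open Matrix

namespace Matrix

variable {l m n : Type*} [Fintype m] [Fintype n]

lemma transpose_fromRows_mul_fromBlocks_mul_fromRows {R : Type*} [Ring R]
    (A : Matrix n n R) (B : Matrix n m R) (D : Matrix m m R) (P : Matrix n l R)
    (Z : Matrix m l R) (hZ : D * Z = -(Bᵀ * P)) :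
    (fromRows P Z)ᵀ * fromBlocks A B Bᵀ D * fromRows P Z = Pᵀ * (A * P + B * Z) := by
  rw [Matrix.mul_assoc, fromBlocks_mul_fromRows, hZ, add_neg_cancel, transpose_fromRows,
    fromCols_mul_fromRows, Matrix.mul_zero, add_zero]

lemma transpose_fromRows_inv_mul_fromBlocks_mul_fromRows {R : Type*} [CommRing R] [DecidableEq n]
    {X : Matrix n n R} (hXs : X.IsSymm) (hX : IsUnit X.det) (Y : Matrix n n R)
    (Γ : Matrix n m R) (D : Matrix m m R) (Z : Matrix m n R) (hZ : D * Z = -Γᵀ) :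
    (fromRows X⁻¹ Z)ᵀ * fromBlocks Y (X * Γ) (X * Γ)ᵀ D * fromRows X⁻¹ Z
      = X⁻¹ * Y * X⁻¹ + Γ * Z := by
  have hXΓ : (X * Γ)ᵀ * X⁻¹ = Γᵀ := by
    rw [transpose_mul, hXs.eq, Matrix.mul_assoc, mul_nonsing_inv _ hX, Matrix.mul_one]
  rw [transpose_fromRows_mul_fromBlocks_mul_fromRows _ _ _ _ _ (hXΓ ▸ hZ), transpose_nonsing_inv,
    hXs.eq, Matrix.mul_add, Matrix.mul_assoc X, ← Matrix.mul_assoc X⁻¹ X, nonsing_inv_mul _ hX,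
    Matrix.one_mul, Matrix.mul_assoc]

lemma PosDef.transpose_fromRows_mul_mul_fromRows [Fintype l] {N : Matrix (n ⊕ m) (n ⊕ m) ℝ}
    (hN : N.PosDef) {P : Matrix n l ℝ} (hP : Function.Injective P.mulVec) (Z : Matrix m l ℝ) :
    ((fromRows P Z)ᵀ * N * fromRows P Z).PosDef := by
  refine conjTranspose_eq_transpose_of_trivial (fromRows P Z) ▸ hN.conjTranspose_mul_mul_same ?_
  intro x y hxy
  rw [fromRows_mulVec, fromRows_mulVec] at hxy
  exact hP (funext fun i => congrFun hxy (Sum.inl i))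

lemma exists_output_block_elimination {𝕜 p k ι : Type*} [Field 𝕜] [DecidableEq n]
    [Fintype p] [DecidableEq p] [Fintype k] [DecidableEq k] [Fintype ι] [DecidableEq ι]
    (C : Matrix p n 𝕜) (H : Matrix k n 𝕜) {β : 𝕜} (hβ : β ≠ 0) {c : ι → 𝕜} (hc : ∀ i, c i ≠ 0) :
    ∃ Z : Matrix (p ⊕ (n ⊕ ι × k)) n 𝕜,
      fromBlocks (1 : Matrix p p 𝕜) 0 0
          (fromBlocks (β • (1 : Matrix n n 𝕜)) 0 0 (diagonal fun ij : ι × k => c ij.1)) * Z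
        = (fromCols Cᵀ (fromCols (1 : Matrix n n 𝕜) (of fun i (ij : ι × k) => Hᵀ i ij.2)))ᵀ ∧
      fromCols Cᵀ (fromCols (1 : Matrix n n 𝕜) (of fun i (ij : ι × k) => Hᵀ i ij.2)) * Z
        = Cᵀ * C + (β⁻¹ • (1 : Matrix n n 𝕜) + (∑ i, (c i)⁻¹) • (Hᵀ * H)) := by
  refine ⟨fromRows C (fromRows (β⁻¹ • 1) (of fun ij j => (c ij.1)⁻¹ * H ij.2 j)), ?_, ?_⟩
  · simp only [fromBlocks_mul_fromRows, transpose_fromCols, transpose_transpose, transpose_one,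
      Matrix.one_mul, Matrix.zero_mul, add_zero, zero_add, smul_mul_smul_comm, mul_inv_cancel₀ hβ,
      one_smul]
    congr 2
    ext ij j
    simp [diagonal_mul, ← mul_assoc, mul_inv_cancel₀ (hc ij.1)]
  · rw [fromCols_mul_fromRows, fromCols_mul_fromRows, Matrix.one_mul]
    congr 2
    ext i j
    simp only [mul_apply, of_apply, transpose_apply, smul_apply, smul_eq_mul,
      Fintype.sum_prod_type, Finset.sum_mul, Finset.mul_sum]
    rw [Finset.sum_comm]
    exact Finset.sum_congr rfl fun _ _ => Finset.sum_congr rfl fun _ _ => by ring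

lemma exists_jump_block_elimination [DecidableEq n] {ι : Type*} [Fintype ι] [DecidableEq ι]
    (μ : ι) (X : ι → Matrix n n ℝ) (hX : ∀ ν, IsUnit (X ν).det) (r : ι → ℝ)
    (hr : ∀ ν, ν ≠ μ → 0 ≤ r ν) :
    ∃ W : Matrix ({ν // ν ≠ μ} × n) n ℝ,
      (of fun (a b : {ν // ν ≠ μ} × n) => if a.1.1 = b.1.1 then -(X a.1.1 a.2 b.2) else 0) * W
        = -(of fun (i : n) (a : {ν // ν ≠ μ} × n) => √(r a.1.1) * if i = a.2 then 1 else 0)ᵀ ∧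
      (of fun (i : n) (a : {ν // ν ≠ μ} × n) => √(r a.1.1) * if i = a.2 then 1 else 0) * W
        = ∑ ν : {ν // ν ≠ μ}, r ν • (X ν)⁻¹ := by
  refine ⟨of fun a j => √(r a.1.1) * (X a.1.1)⁻¹ a.2 j, ?_, ?_⟩
  · ext a j
    have hXX := congrFun (congrFun (mul_nonsing_inv _ (hX a.1.1)) a.2) j
    simp only [mul_apply, one_apply] at hXX
    simp only [mul_apply, of_apply, transpose_apply, neg_apply, Fintype.sum_prod_type]
    rw [Finset.sum_eq_single a.1]
    · simp only [if_true, neg_mul, Finset.sum_neg_distrib, mul_left_comm _ √(r _), ← Finset.mul_sum,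
        hXX, @eq_comm _ j, mul_neg]
    · intro b _ hb
      simp [Subtype.coe_ne_coe.mpr hb.symm]
    · simp
  · ext i j
    simp only [mul_apply, of_apply, Fintype.sum_prod_type, sum_apply, smul_apply, smul_eq_mul]
    refine Finset.sum_congr rfl fun ν _ => ?_
    simp [← mul_assoc, Real.mul_self_sqrt (hr ν ν.2)]

lemma closed_loop_riccati_eq_inv_mul_mul_inv {𝕜 : Type*} [Field 𝕜] [DecidableEq n]
    [DecidableEq m] {X : Matrix n n 𝕜} (hXs : X.IsSymm) (hX : IsUnit X.det)
    {R : Matrix m m 𝕜} (hRs : R.IsSymm) (hR : IsUnit R.det) (A N : Matrix n n 𝕜)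
    (B : Matrix n m 𝕜) (c : 𝕜) {K : Matrix m n 𝕜} (hK : K = -(R⁻¹ * Bᵀ * X⁻¹)) :
    (A + B * K)ᵀ * X⁻¹ + X⁻¹ * (A + B * K) + X⁻¹ * N * X⁻¹ + Kᵀ * R * K + c • X⁻¹
      = X⁻¹ * (X * Aᵀ + A * X + N - B * R⁻¹ * Bᵀ + c • X) * X⁻¹ := by
  have hXinv : (X⁻¹)ᵀ = X⁻¹ := by rw [transpose_nonsing_inv, hXs.eq]
  have hRinv : (R⁻¹)ᵀ = R⁻¹ := by rw [transpose_nonsing_inv, hRs.eq]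
  have hXX : ∀ Y : Matrix n n 𝕜, X⁻¹ * (X * Y) = Y := fun Y => by
    rw [← Matrix.mul_assoc, nonsing_inv_mul _ hX, Matrix.one_mul]
  have hRR : ∀ Y : Matrix m n 𝕜, R⁻¹ * (R * Y) = Y := fun Y => by
    rw [← Matrix.mul_assoc, nonsing_inv_mul _ hR, Matrix.one_mul]
  subst hK
  simp only [transpose_add, transpose_neg, transpose_mul, transpose_transpose, hXinv, hRinv,
    Matrix.add_mul, Matrix.mul_add, Matrix.sub_mul, Matrix.mul_sub, Matrix.neg_mul, Matrix.mul_neg,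
    Matrix.smul_mul, Matrix.mul_smul, Matrix.mul_assoc, mul_nonsing_inv _ hX, Matrix.mul_one, hXX,
    hRR, neg_neg]
  abel

end Matrix

theorem stmt_10_general
    (n m p nE nF nG nH M K : ℕ)
    (A : Fin M → Matrix (Fin n) (Fin n) ℝ)
    (B : Fin M → Matrix (Fin n) (Fin m) ℝ)
    (C : Fin M → Matrix (Fin p) (Fin n) ℝ)
    (E : Fin M → Matrix (Fin n) (Fin nE) ℝ)
    (F : Fin M → Matrix (Fin n) (Fin nF) ℝ)
    (G : Fin M → Matrix (Fin n) (Fin nG) ℝ)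
    (H : Fin M → Matrix (Fin nH) (Fin n) ℝ)
    (Rt : Fin M → Matrix (Fin m) (Fin m) ℝ)
    (hRt : ∀ μ, (Rt μ).PosDef)
    (βbar : Fin M → ℝ) (hβbar : ∀ μ, 0 < βbar μ)
    (q : Matrix (Fin M) (Fin M) ℝ)
    (hq : ∀ μ ν : Fin M, ν ≠ μ → 0 ≤ q μ ν)
    (γ τbar θbar : ℝ) (hτbar : 0 < τbar)
    (s : Fin K → ℝ) (hs : ∀ k, 0 < s k)
    (σ : ℝ) (hσ : σ = τbar⁻¹ + ∑ k, (s k)⁻¹)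
    (X : Fin M → Matrix (Fin n) (Fin n) ℝ)
    (hX : ∀ μ, (X μ).PosDef)
    -- the blocks of the LMI (9)
    (Y11 : Fin M → Matrix (Fin n) (Fin n) ℝ)
    (hY11 : ∀ μ, Y11 μ =
      X μ * (A μ)ᵀ + A μ * X μ + θbar • (E μ * (E μ)ᵀ) + τbar • (F μ * (F μ)ᵀ)
        + (γ ^ 2)⁻¹ • (G μ * (G μ)ᵀ) - B μ * (Rt μ)⁻¹ * (B μ)ᵀ + q μ μ • X μ)
    (Y12 : Fin M →
      Matrix (Fin n) (Fin p ⊕ (Fin n ⊕ Fin (K + 1) × Fin nH)) ℝ)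
    (hY12 : ∀ μ, Y12 μ =
      X μ * Matrix.fromCols (C μ)ᵀ
        (Matrix.fromCols (1 : Matrix (Fin n) (Fin n) ℝ)
          (Matrix.of fun (i : Fin n) (kj : Fin (K + 1) × Fin nH) =>
            (H μ)ᵀ i kj.2)))
    (Y22 : Fin M →
      Matrix (Fin p ⊕ (Fin n ⊕ Fin (K + 1) × Fin nH))
        (Fin p ⊕ (Fin n ⊕ Fin (K + 1) × Fin nH)) ℝ)
    (hY22 : ∀ μ, Y22 μ =
      -(Matrix.fromBlocks (1 : Matrix (Fin p) (Fin p) ℝ) 0 0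
        (Matrix.fromBlocks (βbar μ • (1 : Matrix (Fin n) (Fin n) ℝ)) 0 0
          (Matrix.diagonal fun kj : Fin (K + 1) × Fin nH =>
            Fin.cons (α := fun _ => ℝ) τbar s kj.1))))
    (Y13 : ∀ μ : Fin M, Matrix (Fin n) ({ν : Fin M // ν ≠ μ} × Fin n) ℝ)
    (hY13 : ∀ μ, Y13 μ =
      X μ * Matrix.of (fun (i : Fin n) (νj : {ν : Fin M // ν ≠ μ} × Fin n) =>
        Real.sqrt (q μ νj.1.1) * (if i = νj.2 then (1 : ℝ) else 0)))
    (Y33 : ∀ μ : Fin M,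
      Matrix ({ν : Fin M // ν ≠ μ} × Fin n) ({ν : Fin M // ν ≠ μ} × Fin n) ℝ)
    (hY33 : ∀ μ, Y33 μ =
      Matrix.of (fun (a b : {ν : Fin M // ν ≠ μ} × Fin n) =>
        if a.1.1 = b.1.1 then -(X a.1.1 a.2 b.2) else 0))
    -- the LMI (9): the block matrix is negative definite
    (hLMI : ∀ μ : Fin M,
      (-(Matrix.fromBlocks (Y11 μ)
          (Matrix.fromCols (Y12 μ) (Y13 μ))
          (Matrix.fromRows (Y12 μ)ᵀ (Y13 μ)ᵀ)
          (Matrix.fromBlocks (Y22 μ) 0 0 (Y33 μ)))).PosDef)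
    -- the substitutions X̄(μ) = X(μ)⁻¹ and K̃(μ) = −R̃(μ)⁻¹B(μ)ᵀX̄(μ)
    (Xbar : Fin M → Matrix (Fin n) (Fin n) ℝ)
    (hXbar : ∀ μ, Xbar μ = (X μ)⁻¹)
    (Kt : Fin M → Matrix (Fin m) (Fin n) ℝ)
    (hKt : ∀ μ, Kt μ = -((Rt μ)⁻¹ * (B μ)ᵀ * Xbar μ)) :
    -- the Riccati-type inequality (16)
    ∀ μ : Fin M,
      (-((A μ + B μ * Kt μ)ᵀ * Xbar μ + Xbar μ * (A μ + B μ * Kt μ)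
        + (C μ)ᵀ * C μ + (βbar μ)⁻¹ • (1 : Matrix (Fin n) (Fin n) ℝ)
        + (∑ ν : Fin M, q μ ν • Xbar ν) + σ • ((H μ)ᵀ * H μ)
        + Xbar μ * (θbar • (E μ * (E μ)ᵀ) + τbar • (F μ * (F μ)ᵀ)
            + (γ ^ 2)⁻¹ • (G μ * (G μ)ᵀ)) * Xbar μ
        + (Kt μ)ᵀ * Rt μ * Kt μ)).PosDef := by
  intro μ
  have hXs : ∀ ν, (X ν).IsSymm := fun ν => isHermitian_iff_isSymm.mp (hX ν).1
  have hXu : ∀ ν, IsUnit (X ν).det := fun ν => (hX ν).det_pos.ne'.isUnit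
  obtain ⟨Z, hDZ, hΓZ⟩ := exists_output_block_elimination (C μ) (H μ) (hβbar μ).ne'
    (c := Fin.cons τbar s) (Fin.cases hτbar.ne' fun k => (hs k).ne')
  obtain ⟨W, hYW, hQW⟩ := exists_jump_block_elimination μ X hXu (q μ) (hq μ)
  have hcongr := (hLMI μ).transpose_fromRows_mul_mul_fromRows
    (mulVec_injective_of_isUnit (hX μ).inv.isUnit) (fromRows Z W)
  rw [← transpose_fromCols, hY12, hY13, ← mul_fromCols, Matrix.mul_neg, Matrix.neg_mul,
    transpose_fromRows_inv_mul_fromBlocks_mul_fromRows (hXs μ) (hXu μ)] at hcongr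
  case hZ =>
    rw [hY22, hY33, fromBlocks_mul_fromRows, transpose_fromCols, Matrix.neg_mul, hDZ, hYW,
      Matrix.zero_mul, Matrix.zero_mul, add_zero, zero_add, fromRows_neg]
  have hσc : ∑ i, (Fin.cons (α := fun _ => ℝ) τbar s i)⁻¹ = σ := by
    rw [hσ, Fin.sum_univ_succ]
    simp only [Fin.cons_zero, Fin.cons_succ]
  set N := θbar • (E μ * (E μ)ᵀ) + τbar • (F μ * (F μ)ᵀ) + (γ ^ 2)⁻¹ • (G μ * (G μ)ᵀ) with hN
  have hY : Y11 μ = X μ * (A μ)ᵀ + A μ * X μ + N - B μ * (Rt μ)⁻¹ * (B μ)ᵀ + q μ μ • X μ := by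
    rw [hY11, hN]; abel
  convert hcongr using 2
  rw [fromCols_mul_fromRows, hΓZ, hQW, hσc, hY, ← closed_loop_riccati_eq_inv_mul_mul_inv (hXs μ)
    (hXu μ) (isHermitian_iff_isSymm.mp (hRt μ).1) (hRt μ).det_pos.ne'.isUnit _ _ _ _
    (K := Kt μ) (by rw [hKt, hXbar]), Fintype.sum_eq_add_sum_subtype_ne _ μ]
  simp only [hXbar]
  abel

/-- Deterministic matrix core of the paper's Theorem 1: the LMI condition (9)
(with the rank constraints eliminated by `X̄(μ) = X(μ)⁻¹`) implies the coupled
Riccati-type inequality (16) for the gains `K̃(μ) = −R̃(μ)⁻¹B(μ)ᵀX̄(μ)`. -/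
theorem stmt_10
    (n m p nE nF nG nH M K : ℕ)
    (hn : 0 < n) (hm : 0 < m) (hp : 0 < p) (hnE : 0 < nE) (hnF : 0 < nF)
    (hnG : 0 < nG) (hnH : 0 < nH) (hM : 0 < M) (hK : 0 < K)
    (A : Fin M → Matrix (Fin n) (Fin n) ℝ)
    (B : Fin M → Matrix (Fin n) (Fin m) ℝ)
    (C : Fin M → Matrix (Fin p) (Fin n) ℝ)
    (E : Fin M → Matrix (Fin n) (Fin nE) ℝ)
    (F : Fin M → Matrix (Fin n) (Fin nF) ℝ)
    (G : Fin M → Matrix (Fin n) (Fin nG) ℝ)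
    (H : Fin M → Matrix (Fin nH) (Fin n) ℝ)
    (Rt : Fin M → Matrix (Fin m) (Fin m) ℝ)
    (hRt : ∀ μ, (Rt μ).PosDef)
    (βbar : Fin M → ℝ) (hβbar : ∀ μ, 0 < βbar μ)
    (q : Matrix (Fin M) (Fin M) ℝ)
    (hq : ∀ μ ν : Fin M, ν ≠ μ → 0 ≤ q μ ν)
    (γ τbar θbar : ℝ) (hγ : 0 < γ) (hτbar : 0 < τbar) (hθbar : 0 < θbar)
    (s : Fin K → ℝ) (hs : ∀ k, 0 < s k)
    (σ : ℝ) (hσ : σ = τbar⁻¹ + ∑ k, (s k)⁻¹)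
    (X : Fin M → Matrix (Fin n) (Fin n) ℝ)
    (hX : ∀ μ, (X μ).PosDef)
    -- the blocks of the LMI (9)
    (Y11 : Fin M → Matrix (Fin n) (Fin n) ℝ)
    (hY11 : ∀ μ, Y11 μ =
      X μ * (A μ)ᵀ + A μ * X μ + θbar • (E μ * (E μ)ᵀ) + τbar • (F μ * (F μ)ᵀ)
        + (γ ^ 2)⁻¹ • (G μ * (G μ)ᵀ) - B μ * (Rt μ)⁻¹ * (B μ)ᵀ + q μ μ • X μ)
    (Y12 : Fin M →
      Matrix (Fin n) (Fin p ⊕ (Fin n ⊕ Fin (K + 1) × Fin nH)) ℝ)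
    (hY12 : ∀ μ, Y12 μ =
      X μ * Matrix.fromCols (C μ)ᵀ
        (Matrix.fromCols (1 : Matrix (Fin n) (Fin n) ℝ)
          (Matrix.of fun (i : Fin n) (kj : Fin (K + 1) × Fin nH) =>
            (H μ)ᵀ i kj.2)))
    (Y22 : Fin M →
      Matrix (Fin p ⊕ (Fin n ⊕ Fin (K + 1) × Fin nH))
        (Fin p ⊕ (Fin n ⊕ Fin (K + 1) × Fin nH)) ℝ)
    (hY22 : ∀ μ, Y22 μ =
      -(Matrix.fromBlocks (1 : Matrix (Fin p) (Fin p) ℝ) 0 0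
        (Matrix.fromBlocks (βbar μ • (1 : Matrix (Fin n) (Fin n) ℝ)) 0 0
          (Matrix.diagonal fun kj : Fin (K + 1) × Fin nH =>
            Fin.cons (α := fun _ => ℝ) τbar s kj.1))))
    (Y13 : ∀ μ : Fin M, Matrix (Fin n) ({ν : Fin M // ν ≠ μ} × Fin n) ℝ)
    (hY13 : ∀ μ, Y13 μ =
      X μ * Matrix.of (fun (i : Fin n) (νj : {ν : Fin M // ν ≠ μ} × Fin n) =>
        Real.sqrt (q μ νj.1.1) * (if i = νj.2 then (1 : ℝ) else 0)))
    (Y33 : ∀ μ : Fin M,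
      Matrix ({ν : Fin M // ν ≠ μ} × Fin n) ({ν : Fin M // ν ≠ μ} × Fin n) ℝ)
    (hY33 : ∀ μ, Y33 μ =
      Matrix.of (fun (a b : {ν : Fin M // ν ≠ μ} × Fin n) =>
        if a.1.1 = b.1.1 then -(X a.1.1 a.2 b.2) else 0))
    -- the LMI (9): the block matrix is negative definite
    (hLMI : ∀ μ : Fin M,
      (-(Matrix.fromBlocks (Y11 μ)
          (Matrix.fromCols (Y12 μ) (Y13 μ))
          (Matrix.fromRows (Y12 μ)ᵀ (Y13 μ)ᵀ)
          (Matrix.fromBlocks (Y22 μ) 0 0 (Y33 μ)))).PosDef)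
    -- the substitutions X̄(μ) = X(μ)⁻¹ and K̃(μ) = −R̃(μ)⁻¹B(μ)ᵀX̄(μ)
    (Xbar : Fin M → Matrix (Fin n) (Fin n) ℝ)
    (hXbar : ∀ μ, Xbar μ = (X μ)⁻¹)
    (Kt : Fin M → Matrix (Fin m) (Fin n) ℝ)
    (hKt : ∀ μ, Kt μ = -((Rt μ)⁻¹ * (B μ)ᵀ * Xbar μ)) :
    -- the Riccati-type inequality (16)
    ∀ μ : Fin M,
      (-((A μ + B μ * Kt μ)ᵀ * Xbar μ + Xbar μ * (A μ + B μ * Kt μ)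
        + (C μ)ᵀ * C μ + (βbar μ)⁻¹ • (1 : Matrix (Fin n) (Fin n) ℝ)
        + (∑ ν : Fin M, q μ ν • Xbar ν) + σ • ((H μ)ᵀ * H μ)
        + Xbar μ * (θbar • (E μ * (E μ)ᵀ) + τbar • (F μ * (F μ)ᵀ)
            + (γ ^ 2)⁻¹ • (G μ * (G μ)ᵀ)) * Xbar μ
        + (Kt μ)ᵀ * Rt μ * Kt μ)).PosDef :=
  stmt_10_general n m p nE nF nG nH M K A B C E F G H Rt hRt βbar hβbar q hq γ τbar θbar hτbar s hs
    σ hσ X hX Y11 hY11 Y12 hY12 Y22 hY22 Y13 hY13 Y33 hY33 hLMI Xbar hXbar Kt hKt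
end

section
/- Let ζ : ℝ → ℝ be continuous and let x : ℝ → ℝ be differentiable with x′(t) = −10·x(t) + 10·ζ(t) for all t ≥ 0. Then for every T ≥ 0, ∫₀ᵀ (ζ(t)² − x(t)²) dt ≥ −x(0)²/10. -/
/-!
`V = x² / k` is a storage function for the filter `ẋ = k (ζ − x)`: its derivative is `2 x (ζ − x)`,
and `ζ² − x² = (ζ − x)² + 2 x (ζ − x)`. Integrating, `∫ (ζ² − x²) = ∫ (ζ − x)² + V(T) − V(0)`,
which is at least `−V(0)` when `k > 0`.
-/

open Set

namespace FirstOrderFilter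

variable {k a b : ℝ} {ζ x : ℝ → ℝ}

theorem hasDerivAt_sq_div {t : ℝ} (hk : k ≠ 0) (hx : HasDerivAt x (k * (ζ t - x t)) t) :
    HasDerivAt (fun s => x s ^ 2 / k) (2 * x t * (ζ t - x t)) t := by
  refine ((hx.pow 2).div_const k).congr_deriv ?_
  field_simp
  ring

theorem integral_sq_sub_sq (hk : k ≠ 0) (hζ : ContinuousOn ζ (uIcc a b))
    (hx : ∀ t ∈ uIcc a b, HasDerivAt x (k * (ζ t - x t)) t) :
    ∫ t in a..b, (ζ t ^ 2 - x t ^ 2) =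
      (∫ t in a..b, (ζ t - x t) ^ 2) + (x b ^ 2 / k - x a ^ 2 / k) := by
  have hxc : ContinuousOn x (uIcc a b) := HasDerivAt.continuousOn hx
  have hsupply : IntervalIntegrable (fun t => 2 * x t * (ζ t - x t)) MeasureTheory.volume a b :=
    ((continuousOn_const.mul hxc).mul (hζ.sub hxc)).intervalIntegrable
  have hdissipation : IntervalIntegrable (fun t => (ζ t - x t) ^ 2) MeasureTheory.volume a b :=
    ((hζ.sub hxc).pow 2).intervalIntegrable
  have hstorage : ∫ t in a..b, 2 * x t * (ζ t - x t) = x b ^ 2 / k - x a ^ 2 / k :=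
    intervalIntegral.integral_eq_sub_of_hasDerivAt
      (fun t ht => hasDerivAt_sq_div hk (hx t ht)) hsupply
  rw [← hstorage, ← intervalIntegral.integral_add hdissipation hsupply]
  congr 1 with t
  ring

theorem neg_sq_div_le_integral_sq_sub_sq (hk : 0 < k) (hab : a ≤ b)
    (hζ : ContinuousOn ζ (Icc a b)) (hx : ∀ t ∈ Icc a b, HasDerivAt x (k * (ζ t - x t)) t) :
    -(x a ^ 2) / k ≤ ∫ t in a..b, (ζ t ^ 2 - x t ^ 2) := by
  rw [← uIcc_of_le hab] at hζ hx
  rw [integral_sq_sub_sq hk.ne' hζ hx]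
  have hdissipation : 0 ≤ ∫ t in a..b, (ζ t - x t) ^ 2 :=
    intervalIntegral.integral_nonneg hab fun t _ => sq_nonneg _
  have hstored : 0 ≤ x b ^ 2 / k := by positivity
  linarith [neg_div k (x a ^ 2)]

end FirstOrderFilter

/-- The local uncertainty dynamics `ẋ = −10x + 10ζ`, `ξ = x` satisfies the
integral quadratic constraint `∫₀ᵀ (ζ² − x²) ≥ −x(0)²/10`. -/
theorem stmt_12 (ζ x : ℝ → ℝ)
    (hζ : Continuous ζ)
    (hx : ∀ t : ℝ, 0 ≤ t → HasDerivAt x (-10 * x t + 10 * ζ t) t) :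
    ∀ T : ℝ, 0 ≤ T →
      (∫ t in (0 : ℝ)..T, (ζ t ^ 2 - x t ^ 2)) ≥ -(x 0 ^ 2) / 10 := by
  intro T hT
  refine FirstOrderFilter.neg_sq_div_le_integral_sq_sub_sq (by norm_num) hT hζ.continuousOn
    fun t ht => ?_
  convert hx t ht.1 using 1
  ring
end
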